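/- Let T be a countable tree with ω levels, all finite and nonempty, with no leaves, such that T is balanced (any two nodes on the same level have the same number of immediate successors) and infinitely many levels have branching number at least 2. Let G be the group of level-preserving automorphisms of T. Then for every finite A ⊆ T, there is no infinite branch B of T such that every g ∈ G fixing A pointwise maps B to itself setwise... equivalently: for every finite A ⊆ T there exist two distinct infinite branches agreeing with each other above A that are interchanged by an element of G fixing A pointwise; hence no infinite branch is definable from finitely many parameters. -/

import Mathlib

/-- A well-founded tree order of height at most ω: a partial order with a least
element (root) in which the set of predecessors of every element is finite and
linearly ordered. -/
structure TreeOrder (T : Type*) where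
  le : T → T → Prop
  refl : ∀ x, le x x
  antisymm : ∀ x y, le x y → le y x → x = y
  trans : ∀ x y z, le x y → le y z → le x z
  root : T
  root_le : ∀ x, le root x
  pred_finite : ∀ x, {y | le y x}.Finite
  pred_chain : ∀ x y z, le y x → le z x → le y z ∨ le z y

namespace TreeOrder

variable {T : Type*} (t : TreeOrder T)

/-- The strict order associated to a tree order. -/
def lt (x y : T) : Prop := t.le x y ∧ x ≠ y

/-- The `n`-th level: elements with exactly `n` strict predecessors. -/
def level (n : ℕ) : Set T := {x | {y | t.lt y x}.ncard = n}

/-- The tree has ω levels: every level is nonempty. -/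
def OmegaLevels : Prop := ∀ n, (t.level n).Nonempty

/-- All levels are finite. -/
def FiniteLevels : Prop := ∀ n, (t.level n).Finite

/-- No leaves: every element has a strict successor. -/
def NoLeaves : Prop := ∀ x, ∃ y, t.lt x y

/-- `y` is an immediate successor of `x`. -/
def ImmSucc (x y : T) : Prop := t.lt x y ∧ ¬ ∃ z, t.lt x z ∧ t.lt z y

/-- Union of the first `n` levels. -/
def below (n : ℕ) : Set T := {x | ∃ k < n, x ∈ t.level k}

end TreeOrder

/-!
Choose a level `n` beyond the depths of all parameters at which the branching number is at least
two, let `c` be the node of `B` on level `n + 1` and `c'` a sibling of `c`. Enumerate the children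
of every node. Since the tree is balanced, a permutation of child indices can be applied at all
nodes of one level simultaneously; rebuilding every node from its rebuilt parent then gives an
automorphism. Transposing the indices of `c` and `c'` on level `n` yields an involutive
automorphism fixing the first `n + 1` levels, hence `A`, and sending `c ∈ B` to `c'`, which is not
in `B` because the chain `B` meets level `n + 1` only in `c`.
-/

namespace TreeOrder

open Function

variable {T : Type*} (t : TreeOrder T)

noncomputable def depth (x : T) : ℕ := {y | t.lt y x}.ncard

def children (a : T) : Set T := {z | t.ImmSucc a z}

noncomputable def numChildren (a : T) : ℕ := (t.children a).ncard

def Balanced : Prop := ∀ a b, t.depth a = t.depth b → t.numChildren a = t.numChildren b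

def MapsChildIndices (σ : ℕ → ℕ → ℕ) : Prop :=
  ∀ a, ∀ m < t.numChildren a, σ (t.depth a) m < t.numChildren a

noncomputable def parent (z : T) : T :=
  haveI : Nonempty T := ⟨t.root⟩
  Classical.epsilon fun p => t.lt p z ∧ ∀ y, t.lt y z → t.le y p

variable {t}

lemma lt_of_lt_of_le {x y z : T} (hxy : t.lt x y) (hyz : t.le y z) : t.lt x z := by
  refine ⟨t.trans _ _ _ hxy.1 hyz, ?_⟩
  rintro rfl
  exact hxy.2 (t.antisymm _ _ hxy.1 hyz)

lemma finite_lt (x : T) : {y | t.lt y x}.Finite :=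
  (t.pred_finite x).subset fun _ hy => hy.1

lemma depth_lt_depth {x y : T} (h : t.lt x y) : t.depth x < t.depth y :=
  Set.ncard_lt_ncard ⟨fun _ hz => lt_of_lt_of_le hz h.1, fun hsub => (hsub h).2 rfl⟩
    (finite_lt y)

lemma eq_of_depth_eq {x y : T} (hxy : t.le x y ∨ t.le y x) (hd : t.depth x = t.depth y) :
    x = y := by
  by_contra hne
  rcases hxy with h | h
  · exact (depth_lt_depth ⟨h, hne⟩).ne hd
  · exact (depth_lt_depth ⟨h, Ne.symm hne⟩).ne hd.symm

lemma depth_eq_of_immSucc {p z : T} (h : t.ImmSucc p z) : t.depth z = t.depth p + 1 := by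
  have hp : p ∉ {y | t.lt y p} := fun hp => hp.2 rfl
  have hpred : {y | t.lt y z} = insert p {y | t.lt y p} := by
    ext y
    refine ⟨fun hy => ?_, ?_⟩
    · by_cases hyp : y = p
      · exact Or.inl hyp
      rcases t.pred_chain z y p hy.1 h.1.1 with hle | hle
      · exact Or.inr ⟨hle, hyp⟩
      · exact (h.2 ⟨y, ⟨hle, Ne.symm hyp⟩, hy⟩).elim
    · rintro (rfl | hy)
      · exact h.1
      · exact lt_of_lt_of_le hy h.1.1
  rw [depth, hpred, Set.ncard_insert_of_notMem hp (finite_lt p)]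
  rfl

lemma exists_greatest_lt {z : T} (hz : t.depth z ≠ 0) :
    ∃ p, t.lt p z ∧ ∀ y, t.lt y z → t.le y p := by
  obtain ⟨p, hp, hmax⟩ :=
    Set.exists_max_image _ t.depth (finite_lt z) (Set.nonempty_of_ncard_ne_zero hz)
  refine ⟨p, hp, fun y hy => ?_⟩
  by_cases hpy : p = y
  · exact hpy ▸ t.refl p
  rcases t.pred_chain z y p hy.1 hp.1 with h | h
  · exact h
  · exact absurd (hmax y hy) (depth_lt_depth ⟨h, hpy⟩).not_ge

lemma parent_spec {z : T} (hz : t.depth z ≠ 0) :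
    t.lt (t.parent z) z ∧ ∀ y, t.lt y z → t.le y (t.parent z) :=
  Classical.epsilon_spec (exists_greatest_lt hz)

lemma depth_parent_lt {z : T} (hz : t.depth z ≠ 0) : t.depth (t.parent z) < t.depth z :=
  depth_lt_depth (parent_spec hz).1

lemma le_parent {y z : T} (h : t.lt y z) : t.le y (t.parent z) :=
  (parent_spec (depth_lt_depth h).ne_zero).2 y h

lemma immSucc_parent {z : T} (hz : t.depth z ≠ 0) : t.ImmSucc (t.parent z) z :=
  ⟨(parent_spec hz).1, fun ⟨_, hpw, hwz⟩ => hpw.2 (t.antisymm _ _ hpw.1 (le_parent hwz))⟩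

lemma parent_eq_of_immSucc {p z : T} (h : t.ImmSucc p z) : t.parent z = p := by
  by_contra hne
  exact h.2 ⟨t.parent z, ⟨le_parent h.1, Ne.symm hne⟩,
    (parent_spec (depth_lt_depth h.1).ne_zero).1⟩

lemma children_finite (hf : t.FiniteLevels) (a : T) : (t.children a).Finite :=
  (hf (t.depth a + 1)).subset fun _ hz => depth_eq_of_immSucc hz

section Coordinates

variable (hc : ∀ a, (t.children a).Finite)

noncomputable def childEquiv (a : T) : Fin (t.numChildren a) ≃ t.children a :=
  haveI := (hc a).to_subtype
  (Finite.equivFinOfCardEq (Nat.card_coe_set_eq _)).symm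

noncomputable def child (a : T) (m : ℕ) : T :=
  if h : m < t.numChildren a then childEquiv hc a ⟨m, h⟩ else a

open Classical in
noncomputable def childIndex (z : T) : ℕ :=
  if h : t.ImmSucc (t.parent z) z then (childEquiv hc (t.parent z)).symm ⟨z, h⟩ else 0

lemma child_val {a : T} (k : Fin (t.numChildren a)) : child hc a k = childEquiv hc a k :=
  dif_pos k.isLt

lemma immSucc_child {a : T} {m : ℕ} (h : m < t.numChildren a) : t.ImmSucc a (child hc a m) :=
  child_val hc ⟨m, h⟩ ▸ (childEquiv hc a ⟨m, h⟩).2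

lemma childIndex_of_immSucc {a z : T} (h : t.ImmSucc a z) :
    childIndex hc z = (childEquiv hc a).symm ⟨z, h⟩ := by
  obtain rfl := parent_eq_of_immSucc h
  exact dif_pos h

lemma childIndex_lt {a z : T} (h : t.ImmSucc a z) : childIndex hc z < t.numChildren a := by
  rw [childIndex_of_immSucc hc h]
  exact Fin.isLt _

lemma child_childIndex {a z : T} (h : t.ImmSucc a z) : child hc a (childIndex hc z) = z := by
  rw [childIndex_of_immSucc hc h, child_val, Equiv.apply_symm_apply]

lemma childIndex_child {a : T} {m : ℕ} (h : m < t.numChildren a) :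
    childIndex hc (child hc a m) = m := by
  rw [childIndex_of_immSucc hc (immSucc_child hc h)]
  have : (⟨child hc a m, immSucc_child hc h⟩ : t.children a) = childEquiv hc a ⟨m, h⟩ :=
    Subtype.ext (child_val hc ⟨m, h⟩)
  rw [this, Equiv.symm_apply_apply]

end Coordinates

section Relabel

variable (hc : ∀ a, (t.children a).Finite) (σ : ℕ → ℕ → ℕ)

noncomputable def relabel (z : T) : T :=
  if h : t.depth z = 0 then z
  else
    have : t.depth (t.parent z) < t.depth z := depth_parent_lt h
    child hc (relabel (t.parent z)) (σ (t.depth (t.parent z)) (childIndex hc z))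
termination_by t.depth z

lemma relabel_of_depth_eq_zero {z : T} (h : t.depth z = 0) : relabel hc σ z = z := by
  rw [relabel, dif_pos h]

lemma relabel_of_depth_ne_zero {z : T} (h : t.depth z ≠ 0) :
    relabel hc σ z =
      child hc (relabel hc σ (t.parent z)) (σ (t.depth (t.parent z)) (childIndex hc z)) := by
  rw [relabel, dif_neg h]

lemma relabel_eq_self {z : T} (hσ : ∀ m < t.depth z, σ m = id) : relabel hc σ z = z := by
  induction hd : t.depth z using Nat.strong_induction_on generalizing z with
  | _ n IH =>
  by_cases hz : t.depth z = 0
  · exact relabel_of_depth_eq_zero hc σ hz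
  have hp := depth_parent_lt hz
  rw [relabel_of_depth_ne_zero hc σ hz, hσ _ hp,
    IH _ (hd ▸ hp) (fun m hm => hσ m (hm.trans hp)) rfl, id,
    child_childIndex hc (immSucc_parent hz)]

variable {hc σ}

lemma relabelIndex_lt (hbal : t.Balanced) (hσ : t.MapsChildIndices σ)
    {z : T} (hz : t.depth z ≠ 0)
    (hp : t.depth (relabel hc σ (t.parent z)) = t.depth (t.parent z)) :
    σ (t.depth (t.parent z)) (childIndex hc z) < t.numChildren (relabel hc σ (t.parent z)) :=
  hbal _ _ hp ▸ hσ _ _ (childIndex_lt hc (immSucc_parent hz))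

lemma depth_relabel (hbal : t.Balanced) (hσ : t.MapsChildIndices σ) (z : T) :
    t.depth (relabel hc σ z) = t.depth z := by
  induction hd : t.depth z using Nat.strong_induction_on generalizing z with
  | _ n IH =>
  by_cases hz : t.depth z = 0
  · rwa [relabel_of_depth_eq_zero hc σ hz]
  have hp := IH _ (hd ▸ depth_parent_lt hz) (t.parent z) rfl
  rw [← hd, relabel_of_depth_ne_zero hc σ hz,
    depth_eq_of_immSucc (immSucc_child hc (relabelIndex_lt hbal hσ hz hp)), hp,
    depth_eq_of_immSucc (immSucc_parent hz)]

lemma immSucc_relabel (hbal : t.Balanced) (hσ : t.MapsChildIndices σ)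
    {z : T} (hz : t.depth z ≠ 0) :
    t.ImmSucc (relabel hc σ (t.parent z)) (relabel hc σ z) := by
  rw [relabel_of_depth_ne_zero hc σ hz]
  exact immSucc_child hc (relabelIndex_lt hbal hσ hz (depth_relabel hbal hσ _))

lemma childIndex_relabel (hbal : t.Balanced) (hσ : t.MapsChildIndices σ)
    {z : T} (hz : t.depth z ≠ 0) :
    childIndex hc (relabel hc σ z) = σ (t.depth (t.parent z)) (childIndex hc z) := by
  rw [relabel_of_depth_ne_zero hc σ hz]
  exact childIndex_child hc (relabelIndex_lt hbal hσ hz (depth_relabel hbal hσ _))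

lemma relabel_involutive (hbal : t.Balanced) (hσ : t.MapsChildIndices σ)
    (hσinv : ∀ n, Involutive (σ n)) :
    Involutive (relabel hc σ) := by
  intro z
  induction hd : t.depth z using Nat.strong_induction_on generalizing z with
  | _ n IH =>
  by_cases hz : t.depth z = 0
  · rw [relabel_of_depth_eq_zero hc σ hz, relabel_of_depth_eq_zero hc σ hz]
  have hz' : t.depth (relabel hc σ z) ≠ 0 := by rwa [depth_relabel hbal hσ]
  rw [relabel_of_depth_ne_zero hc σ hz', parent_eq_of_immSucc (immSucc_relabel hbal hσ hz),
    IH _ (hd ▸ depth_parent_lt hz) _ rfl, childIndex_relabel hbal hσ hz,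
    depth_relabel hbal hσ, hσinv, child_childIndex hc (immSucc_parent hz)]

lemma relabel_le_relabel (hbal : t.Balanced) (hσ : t.MapsChildIndices σ)
    {x y : T} (h : t.le x y) : t.le (relabel hc σ x) (relabel hc σ y) := by
  induction hd : t.depth y using Nat.strong_induction_on generalizing y with
  | _ n IH =>
  by_cases hxy : x = y
  · exact hxy ▸ t.refl _
  have hlt : t.lt x y := ⟨h, hxy⟩
  have hy : t.depth y ≠ 0 := (depth_lt_depth hlt).ne_zero
  exact t.trans _ _ _ (IH _ (hd ▸ depth_parent_lt hy) (le_parent hlt) rfl)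
    (immSucc_relabel hbal hσ hy).1.1

lemma le_iff_relabel_le (hbal : t.Balanced) (hσ : t.MapsChildIndices σ)
    (hσinv : ∀ n, Involutive (σ n)) (x y : T) :
    t.le x y ↔ t.le (relabel hc σ x) (relabel hc σ y) := by
  refine ⟨relabel_le_relabel hbal hσ, fun h => ?_⟩
  simpa only [relabel_involutive hbal hσ hσinv _] using relabel_le_relabel (hc := hc) hbal hσ h

end Relabel

lemma exists_automorphism_fixing_depth_le_sending_sibling (hc : ∀ a, (t.children a).Finite)
    (hbal : t.Balanced) {b u v : T} (hu : t.ImmSucc b u) (hv : t.ImmSucc b v) :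
    ∃ g : T ≃ T, (∀ x y : T, t.le x y ↔ t.le (g x) (g y)) ∧
      (∀ z, t.depth z ≤ t.depth b → g z = z) ∧ g u = v := by
  set i := childIndex hc u
  set j := childIndex hc v
  let σ : ℕ → ℕ → ℕ := fun n => if n = t.depth b then Equiv.swap i j else id
  have hσinv : ∀ n, Involutive (σ n) := by
    intro n
    by_cases hn : n = t.depth b
    · simp only [σ, if_pos hn]
      exact Equiv.swap_apply_self i j
    · simp only [σ, if_neg hn]
      exact fun _ => rfl
  have hσ : t.MapsChildIndices σ := by
    intro a m hm
    by_cases ha : t.depth a = t.depth b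
    · have hi := hbal _ _ ha ▸ childIndex_lt hc hu
      have hj := hbal _ _ ha ▸ childIndex_lt hc hv
      simp only [σ, if_pos ha, Equiv.swap_apply_def]
      split_ifs <;> assumption
    · simpa only [σ, if_neg ha, id] using hm
  have hσb : ∀ m < t.depth b, σ m = id := fun m hm => if_neg hm.ne
  have hu0 : t.depth u ≠ 0 := by simp [depth_eq_of_immSucc hu]
  refine ⟨(relabel_involutive hbal hσ hσinv).toPerm _, le_iff_relabel_le hbal hσ hσinv,
    fun z hz => relabel_eq_self hc σ fun m hm => hσb m (hm.trans_le hz), ?_⟩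
  change relabel hc σ u = v
  rw [relabel_of_depth_ne_zero hc σ hu0, parent_eq_of_immSucc hu, relabel_eq_self hc σ hσb]
  simp only [σ, if_pos rfl, Equiv.swap_apply_left, i, j, child_childIndex hc hv]

end TreeOrder

open TreeOrder in
theorem stmt15_general {T : Type*} (t : TreeOrder T)
    (hf : t.FiniteLevels)
    (hbal : ∀ n, ∀ x ∈ t.level n, ∀ y ∈ t.level n,
      {z | t.ImmSucc x z}.ncard = {z | t.ImmSucc y z}.ncard)
    (hbr : ∀ N, ∃ n, N ≤ n ∧ ∃ x ∈ t.level n, 2 ≤ {z | t.ImmSucc x z}.ncard)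
    (A : Set T) (hA : A.Finite) (B : Set T)
    (hBchain : ∀ x ∈ B, ∀ y ∈ B, t.le x y ∨ t.le y x)
    (hBmeets : ∀ n, (B ∩ t.level n).Nonempty) :
    ∃ g : T ≃ T, (∀ x y : T, t.le x y ↔ t.le (g x) (g y)) ∧
      (∀ a ∈ A, g a = a) ∧ (⇑g) '' B ≠ B := by
  obtain ⟨M, hM⟩ := (hA.image t.depth).bddAbove
  obtain ⟨n, hMn, x, hx, hx2⟩ := hbr M
  obtain ⟨c, hcB, hcn : t.depth c = n + 1⟩ := hBmeets (n + 1)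
  have hbc : t.ImmSucc (t.parent c) c := immSucc_parent (by omega)
  have hbn : t.depth (t.parent c) = n := by
    have := depth_eq_of_immSucc hbc
    omega
  obtain ⟨v, hv, hvc⟩ := Set.exists_ne_of_one_lt_ncard (hbal n x hx _ hbn ▸ hx2) c
  obtain ⟨g, hg, hfix, hgc⟩ := exists_automorphism_fixing_depth_le_sending_sibling
    (children_finite hf) (fun a a' h => hbal _ a rfl a' h.symm) hbc hv
  refine ⟨g, hg, fun a ha => hfix a ((hM ⟨a, ha, rfl⟩).trans (hbn ▸ hMn)),
    fun hgB => hvc ?_⟩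
  have hvB : v ∈ B := hgB ▸ hgc ▸ Set.mem_image_of_mem g hcB
  exact eq_of_depth_eq (hBchain v hvB c hcB)
    (by rw [depth_eq_of_immSucc hv, depth_eq_of_immSucc hbc])

/-- In a countable balanced tree with ω finite levels, no leaves, and branching
at least 2 infinitely often, no infinite branch is definable from finitely many
parameters: for every finite A and every infinite branch B there is an
automorphism fixing A pointwise and moving B. -/
theorem stmt15 {T : Type*} [Countable T] (t : TreeOrder T)
    (ho : t.OmegaLevels) (hf : t.FiniteLevels) (hnl : t.NoLeaves)
    (hbal : ∀ n, ∀ x ∈ t.level n, ∀ y ∈ t.level n,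
      {z | t.ImmSucc x z}.ncard = {z | t.ImmSucc y z}.ncard)
    (hbr : ∀ N, ∃ n, N ≤ n ∧ ∃ x ∈ t.level n, 2 ≤ {z | t.ImmSucc x z}.ncard)
    (A : Set T) (hA : A.Finite) (B : Set T)
    (hBchain : ∀ x ∈ B, ∀ y ∈ B, t.le x y ∨ t.le y x)
    (hBmeets : ∀ n, (B ∩ t.level n).Nonempty) :
    ∃ g : T ≃ T, (∀ x y : T, t.le x y ↔ t.le (g x) (g y)) ∧
      (∀ a ∈ A, g a = a) ∧ (⇑g) '' B ≠ B :=
  stmt15_general t hf hbal hbr A hA B hBchain hBmeets
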